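/- (Uniqueness of prime factorization.) Let φ be an isomorphism between nontrivial, connected finite graphs with loops G and H, each with at least one unlooped vertex, where G = □_{i : Fin k} G i and H = □_{j : Fin ℓ} H j are Cartesian products of irreducible graphs. Then k = ℓ and there is a permutation π of Fin k such that G i is isomorphic to H (π i) for every i. -/

import Mathlib

universe u

/-- A graph with loops on a vertex type `V`: a symmetric binary relation. -/
structure LoopGraph (V : Type*) where
  adj : V → V → Prop
  symm : ∀ u v, adj u v → adj v u

namespace LoopGraph

/-- The Cartesian product `G □ H` of two graphs with loops. -/
def box {V W : Type*} (G : LoopGraph V) (H : LoopGraph W) : LoopGraph (V × W) where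
  adj p q := (G.adj p.1 q.1 ∧ p.2 = q.2) ∨ (p.1 = q.1 ∧ H.adj p.2 q.2)
  symm p q h := by
    rcases h with ⟨h, e⟩ | ⟨e, h⟩
    · exact Or.inl ⟨G.symm _ _ h, e.symm⟩
    · exact Or.inr ⟨e.symm, H.symm _ _ h⟩

/-- The Cartesian product `□_i G i` of a finite family of graphs with loops. -/
def boxPi {k : ℕ} {V : Fin k → Type*} (G : ∀ i, LoopGraph (V i)) :
    LoopGraph (∀ i, V i) where
  adj x y := ∃ i, (G i).adj (x i) (y i) ∧ ∀ j, j ≠ i → x j = y j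
  symm x y h := by
    obtain ⟨i, h1, h2⟩ := h
    exact ⟨i, (G i).symm _ _ h1, fun j hj => (h2 j hj).symm⟩

/-- Two graphs with loops are isomorphic if there is a bijection of the vertex
types preserving and reflecting adjacency. -/
def IsIsomorphic {V W : Type*} (G : LoopGraph V) (H : LoopGraph W) : Prop :=
  ∃ φ : V ≃ W, ∀ u v, G.adj u v ↔ H.adj (φ u) (φ v)

/-- `N G` is `G` with its loops removed, as a simple graph. -/
def N {V : Type*} (G : LoopGraph V) : SimpleGraph V where
  Adj u v := u ≠ v ∧ G.adj u v
  symm := ⟨fun _ _ h => ⟨h.1.symm, G.symm _ _ h.2⟩⟩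
  loopless := ⟨fun _ h => h.1 rfl⟩

/-- `G` with its loops removed, as a graph with loops. -/
def removeLoops {V : Type*} (G : LoopGraph V) : LoopGraph V where
  adj u v := u ≠ v ∧ G.adj u v
  symm u v h := ⟨h.1.symm, G.symm _ _ h.2⟩

/-- `G` with a loop attached to every vertex. -/
def fullLoops {V : Type*} (G : LoopGraph V) : LoopGraph V where
  adj u v := G.adj u v ∨ u = v
  symm u v h := by
    rcases h with h | h
    · exact Or.inl (G.symm _ _ h)
    · exact Or.inr h.symm

/-- A graph with loops is trivial if it has exactly one vertex and no loop. -/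
def IsTrivial {V : Type*} (G : LoopGraph V) : Prop :=
  (∃ v : V, ∀ w : V, w = v) ∧ ∀ v, ¬ G.adj v v

/-- A nontrivial connected graph with loops with at least one unlooped vertex is
irreducible if in every factorization into two factors, one factor is trivial. -/
def Irreducible {V : Type u} (G : LoopGraph V) : Prop :=
  ¬ G.IsTrivial ∧ G.N.Connected ∧ (∃ v, ¬ G.adj v v) ∧
    ∀ (W L : Type u) (H : LoopGraph W) (K : LoopGraph L),
      G.IsIsomorphic (H.box K) → H.IsTrivial ∨ K.IsTrivial

/-- A set of vertices is convex if every shortest walk (in `N G`) between two of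
its vertices stays inside the set. -/
def ConvexSet {V : Type*} (G : LoopGraph V) (S : Set V) : Prop :=
  ∀ u ∈ S, ∀ v ∈ S, ∀ p : G.N.Walk u v,
    p.length = G.N.dist u v → ∀ x ∈ p.support, x ∈ S

/-- The disjoint union of two graphs with loops. -/
def disjUnion {W U : Type*} (H : LoopGraph W) (K : LoopGraph U) :
    LoopGraph (W ⊕ U) where
  adj x y := Sum.LiftRel H.adj K.adj x y
  symm x y h := by
    cases h with
    | inl h => exact Sum.LiftRel.inl (H.symm _ _ h)
    | inr h => exact Sum.LiftRel.inr (K.symm _ _ h)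

/-- The trivial graph `K₁`: one vertex, no loop. -/
def K1 : LoopGraph PUnit := ⟨fun _ _ => False, fun _ _ h => h.elim⟩

/-- The single looped vertex `K₁*`. -/
def K1star : LoopGraph PUnit := ⟨fun _ _ => True, fun _ _ _ => trivial⟩

/-- The 0/1 adjacency matrix of a graph with loops. -/
def adjMatrix {V : Type*} (G : LoopGraph V) [DecidableRel G.adj] : Matrix V V ℕ :=
  Matrix.of fun u v => if G.adj u v then 1 else 0

end LoopGraph


/-!
Let `GA □ GB ≅ GC □ GD` be two factorizations of a connected graph with an unlooped vertex
`(a₀, b₀)`. The image of each edge of the layer `A × {b₀}` keeps either its `C`- or its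
`D`-coordinate, and by the square property of box products a path in the layer can be reordered
so that all steps keeping the `D`-coordinate come first. Since `GA` is connected, the image of
the layer is therefore a product set `X × Y`, and `GA ≅ GC[X] □ GD[Y]`. Doing this for the four
layers through the base vertex gives a common refinement `GA ≅ P₁ □ P₂`, `GB ≅ Q₁ □ Q₂`,
`GC ≅ P₁ □ Q₁`, `GD ≅ P₂ □ Q₂`.

Uniqueness follows by induction on the number of factors. Split off the first factors,
`X □ R ≅ Y □ S`. By irreducibility either `X ≅ Y` and `R ≅ S`, or `R ≅ Y □ Q` and `S ≅ X □ Q`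
for some `Q`. In the second case a factorization of `Q` into irreducibles (which exists by
induction on the number of vertices) reduces the claim to two instances with fewer factors.
-/

namespace Relation

variable {α : Type*} {r s : α → α → Prop}

theorem exists_reflTransGen_of_commute (h : ∀ x y z, r x y → s y z → ∃ t, s x t ∧ r t z)
    {x y z : α} (hxy : r x y) (hyz : ReflTransGen s y z) : ∃ t, ReflTransGen s x t ∧ r t z := by
  induction hyz using ReflTransGen.head_induction_on generalizing x with
  | refl => exact ⟨x, .refl, hxy⟩
  | head hyy' _ ih =>
    obtain ⟨t, hxt, htz⟩ := h _ _ _ hxy hyy'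
    obtain ⟨t', htt', ht'z⟩ := ih htz
    exact ⟨t', .head hxt htt', ht'z⟩

theorem ReflTransGen.exists_sorted_of_commute (h : ∀ x y z, r x y → s y z → ∃ t, s x t ∧ r t z)
    {x y : α} (hxy : ReflTransGen (fun a b => r a b ∨ s a b) x y) :
    ∃ t, ReflTransGen s x t ∧ ReflTransGen r t y := by
  induction hxy using ReflTransGen.head_induction_on with
  | refl => exact ⟨y, .refl, .refl⟩
  | head hxx' _ ih =>
    obtain ⟨t, hx't, hty⟩ := ih
    rcases hxx' with hr | hs
    · obtain ⟨t', hxt', ht't⟩ := exists_reflTransGen_of_commute h hr hx't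
      exact ⟨t', hxt', .head ht't hty⟩
    · exact ⟨t, .head hs hx't, hty⟩

theorem ReflTransGen.apply_eq {β : Type*} {g : α → β} (h : ∀ a b, r a b → g a = g b) {x y : α}
    (hxy : ReflTransGen r x y) : g x = g y := by
  induction hxy with
  | refl => rfl
  | tail _ hyz ih => exact ih.trans (h _ _ hyz)

end Relation

namespace SimpleGraph

variable {α β γ δ : Type*} {G₁ : SimpleGraph α} {G₂ : SimpleGraph β} {H₁ : SimpleGraph γ}
  {H₂ : SimpleGraph δ}

theorem boxProd_snd_eq_of_adj_of_adj {z : α × β} {a a' : α} {b : β} (h : (G₁ □ G₂).Adj z (a, b))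
    (h' : (G₁ □ G₂).Adj z (a', b)) (ha : a ≠ a') : z.2 = b := by
  simp only [boxProd_adj] at h h'
  grind

namespace Iso

variable (f : (G₁ □ G₂) ≃g (H₁ □ H₂)) {b : β}

/-- The new middle vertex is the preimage of the fourth corner of the square spanned by the
images of `a₁`, `a₂`, `a₃`. -/
theorem exists_layer_square {a₁ a₂ a₃ : α} (h₁₂ : G₁.Adj a₁ a₂)
    (hc : (f (a₁, b)).1 = (f (a₂, b)).1) (h₂₃ : G₁.Adj a₂ a₃)
    (hd : (f (a₂, b)).2 = (f (a₃, b)).2) :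
    ∃ a₄, (G₁.Adj a₁ a₄ ∧ (f (a₁, b)).2 = (f (a₄, b)).2) ∧
      (G₁.Adj a₄ a₃ ∧ (f (a₄, b)).1 = (f (a₃, b)).1) := by
  have e₁₂ := f.map_adj_iff.mpr (boxProd_adj_left.mpr h₁₂ : (G₁ □ G₂).Adj (a₁, b) (a₂, b))
  have e₂₃ := f.map_adj_iff.mpr (boxProd_adj_left.mpr h₂₃ : (G₁ □ G₂).Adj (a₂, b) (a₃, b))
  rw [boxProd_adj, hc] at e₁₂
  rw [boxProd_adj, hd] at e₂₃
  replace e₁₂ : H₂.Adj (f (a₁, b)).2 (f (a₂, b)).2 := by simpa using e₁₂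
  replace e₂₃ : H₁.Adj (f (a₂, b)).1 (f (a₃, b)).1 := by simpa using e₂₃
  obtain ⟨z, hfz⟩ : ∃ z, f z = ((f (a₃, b)).1, (f (a₁, b)).2) := ⟨_, f.apply_symm_apply _⟩
  have hz₁ : (G₁ □ G₂).Adj z (a₁, b) := by
    rw [← f.map_adj_iff, hfz, boxProd_adj, hc]
    exact .inl ⟨e₂₃.symm, rfl⟩
  have hz₃ : (G₁ □ G₂).Adj z (a₃, b) := by
    rw [← f.map_adj_iff, hfz, boxProd_adj, ← hd]
    exact .inr ⟨e₁₂, rfl⟩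
  have ha₁₃ : a₁ ≠ a₃ := by
    rintro rfl
    exact e₂₃.ne hc.symm
  have hzb : z = (z.1, b) := Prod.ext rfl (boxProd_snd_eq_of_adj_of_adj hz₁ hz₃ ha₁₃)
  rw [hzb, boxProd_adj_left] at hz₁ hz₃
  rw [hzb] at hfz
  exact ⟨z.1, ⟨hz₁.symm, by rw [hfz]⟩, ⟨hz₃, by rw [hfz]⟩⟩

/-- The image of the layer `α × {b}` is a product set. -/
theorem exists_layer_fst_eq_snd_eq (hG₁ : G₁.Preconnected) (b : β) (p q : α) :
    ∃ a, (f (a, b)).1 = (f (p, b)).1 ∧ (f (a, b)).2 = (f (q, b)).2 := by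
  let keepsFst a a' := G₁.Adj a a' ∧ (f (a, b)).1 = (f (a', b)).1
  let keepsSnd a a' := G₁.Adj a a' ∧ (f (a, b)).2 = (f (a', b)).2
  have hpath : Relation.ReflTransGen (fun a a' => keepsFst a a' ∨ keepsSnd a a') q p := by
    refine Relation.ReflTransGen.mono (fun a a' h => ?_) q p
      ((reachable_iff_reflTransGen q p).mp (hG₁ q p))
    have hf := f.map_adj_iff.mpr (boxProd_adj_left.mpr h : (G₁ □ G₂).Adj (a, b) (a', b))
    rw [boxProd_adj] at hf
    exact (hf.imp (fun h' => ⟨h, h'.2⟩) (fun h' => ⟨h, h'.2⟩)).symm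
  obtain ⟨a, hqa, hap⟩ := hpath.exists_sorted_of_commute fun _ _ _ h h' =>
    f.exists_layer_square h.1 h.2 h'.1 h'.2
  exact ⟨a, hap.apply_eq fun _ _ h => h.2, (hqa.apply_eq fun _ _ h => h.2).symm⟩

end Iso

end SimpleGraph

namespace LoopGraph

section

variable {V W X Y : Type*}

def induce (G : LoopGraph V) (s : Set V) : LoopGraph s where
  adj x y := G.adj x y
  symm x y := G.symm x y

theorem box_adj_self {G : LoopGraph V} {H : LoopGraph W} {a : V} {b : W} :
    (G.box H).adj (a, b) (a, b) ↔ G.adj a a ∨ H.adj b b := by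
  simp [box]

theorem box_adj_left_iff {G : LoopGraph V} {H : LoopGraph W} {b : W} (hb : ¬H.adj b b)
    {a a' : V} : (G.box H).adj (a, b) (a', b) ↔ G.adj a a' := by
  simp [box, hb]

theorem N_box (G : LoopGraph V) (H : LoopGraph W) : (G.box H).N = G.N □ H.N := by
  ext ⟨a, b⟩ ⟨a', b'⟩
  simp only [N, box, SimpleGraph.boxProd_adj, ne_eq, Prod.mk.injEq]
  grind

theorem connected_box_iff {G : LoopGraph V} {H : LoopGraph W} :
    (G.box H).N.Connected ↔ G.N.Connected ∧ H.N.Connected := by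
  rw [N_box, SimpleGraph.connected_boxProd]

namespace IsIsomorphic

@[refl]
protected theorem refl (G : LoopGraph V) : G.IsIsomorphic G :=
  ⟨Equiv.refl _, fun _ _ => Iff.rfl⟩

@[symm]
protected theorem symm {G : LoopGraph V} {H : LoopGraph W} (h : G.IsIsomorphic H) :
    H.IsIsomorphic G := by
  obtain ⟨φ, hφ⟩ := h
  exact ⟨φ.symm, fun u v => by rw [hφ, φ.apply_symm_apply, φ.apply_symm_apply]⟩

@[trans]
protected theorem trans {G : LoopGraph V} {H : LoopGraph W} {K : LoopGraph X}
    (h : G.IsIsomorphic H) (h' : H.IsIsomorphic K) : G.IsIsomorphic K := by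
  obtain ⟨φ, hφ⟩ := h
  obtain ⟨ψ, hψ⟩ := h'
  exact ⟨φ.trans ψ, fun u v => (hφ u v).trans (hψ _ _)⟩

theorem box_congr {G : LoopGraph V} {G' : LoopGraph X} {H : LoopGraph W} {H' : LoopGraph Y}
    (hG : G.IsIsomorphic G') (hH : H.IsIsomorphic H') : (G.box H).IsIsomorphic (G'.box H') := by
  obtain ⟨φ, hφ⟩ := hG
  obtain ⟨ψ, hψ⟩ := hH
  refine ⟨φ.prodCongr ψ, fun u v => ?_⟩
  simp only [box, Equiv.prodCongr_apply, Prod.map, hφ, hψ, φ.apply_eq_iff_eq, ψ.apply_eq_iff_eq]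

theorem isTrivial {G : LoopGraph V} {H : LoopGraph W} (h : G.IsIsomorphic H)
    (hG : G.IsTrivial) : H.IsTrivial := by
  obtain ⟨φ, hφ⟩ := h
  obtain ⟨⟨v, hv⟩, hloop⟩ := hG
  refine ⟨⟨φ v, fun w => ?_⟩, fun w hw => hloop (φ.symm w) ?_⟩
  · rw [← φ.apply_symm_apply w, hv (φ.symm w)]
  · rwa [hφ, φ.apply_symm_apply]

theorem connected {G : LoopGraph V} {H : LoopGraph W} (h : G.IsIsomorphic H)
    (hG : G.N.Connected) : H.N.Connected := by
  obtain ⟨φ, hφ⟩ := h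
  let ψ : G.N ≃g H.N := ⟨φ, fun {u v} => by simp only [N, ne_eq, φ.apply_eq_iff_eq, ← hφ]⟩
  exact ψ.connected_iff.mp hG

theorem exists_not_adj {G : LoopGraph V} {H : LoopGraph W} (h : G.IsIsomorphic H)
    (hG : ∃ v, ¬G.adj v v) : ∃ w, ¬H.adj w w := by
  obtain ⟨φ, hφ⟩ := h
  obtain ⟨v, hv⟩ := hG
  exact ⟨φ v, (hφ v v).not.mp hv⟩

theorem finite_right {G : LoopGraph V} {H : LoopGraph W} {K : LoopGraph X} [Finite V]
    [Nonempty W] (h : G.IsIsomorphic (H.box K)) : Finite X :=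
  have : Finite (W × X) := .of_equiv V h.choose
  .prod_right W

end IsIsomorphic

theorem box_comm (G : LoopGraph V) (H : LoopGraph W) : (G.box H).IsIsomorphic (H.box G) := by
  refine ⟨Equiv.prodComm V W, fun _ _ => ?_⟩
  simp only [box, Equiv.prodComm_apply, Prod.fst_swap, Prod.snd_swap]
  tauto

theorem box_assoc (G : LoopGraph V) (H : LoopGraph W) (K : LoopGraph X) :
    ((G.box H).box K).IsIsomorphic (G.box (H.box K)) := by
  refine ⟨Equiv.prodAssoc V W X, fun ⟨⟨_, _⟩, _⟩ ⟨⟨_, _⟩, _⟩ => ?_⟩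
  simp only [box, Equiv.prodAssoc_apply, Prod.mk.injEq]
  tauto

theorem box_isTrivial_right {G : LoopGraph V} {K : LoopGraph W} (hK : K.IsTrivial) :
    (G.box K).IsIsomorphic G := by
  obtain ⟨⟨w, hw⟩, hloop⟩ := hK
  have : Unique W := ⟨⟨w⟩, hw⟩
  refine ⟨Equiv.prodUnique V W, fun u v => ?_⟩
  simp only [box, Equiv.prodUnique_apply, Subsingleton.elim u.2 v.2, hloop, and_false, or_false,
    and_true]

theorem box_isTrivial_left {G : LoopGraph V} {K : LoopGraph W} (hK : K.IsTrivial) :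
    (K.box G).IsIsomorphic G :=
  (box_comm K G).trans (box_isTrivial_right hK)

theorem exists_not_adj_box_iff {G : LoopGraph V} {H : LoopGraph W} :
    (∃ x, ¬(G.box H).adj x x) ↔ (∃ v, ¬G.adj v v) ∧ ∃ w, ¬H.adj w w := by
  simp only [Prod.exists, box_adj_self, not_or, exists_and_left, exists_and_right]

theorem one_lt_card_of_not_isTrivial [Finite V] {G : LoopGraph V} (hG : ∃ v, ¬G.adj v v)
    (hnt : ¬G.IsTrivial) : 1 < Nat.card V := by
  obtain ⟨v, hv⟩ := hG
  by_contra! h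
  have : Subsingleton V := Finite.card_le_one_iff_subsingleton.mp h
  exact hnt ⟨⟨v, fun w => Subsingleton.elim w v⟩, fun w => Subsingleton.elim w v ▸ hv⟩


end

/-- Keeping the image `(c₀, d₀)` of the base vertex as a field makes `symm` definitionally
involutive. -/
structure BoxIso {A B C D : Type*} (GA : LoopGraph A) (GB : LoopGraph B) (GC : LoopGraph C)
    (GD : LoopGraph D) where
  e : A × B ≃ C × D
  adj_iff : ∀ x y, (GA.box GB).adj x y ↔ (GC.box GD).adj (e x) (e y)
  a₀ : A
  b₀ : B
  c₀ : C
  d₀ : D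
  e_base : e (a₀, b₀) = (c₀, d₀)
  not_adj_base : ¬(GA.box GB).adj (a₀, b₀) (a₀, b₀)
  connected : (GA.box GB).N.Connected

namespace BoxIso

variable {A B C D : Type*} {GA : LoopGraph A} {GB : LoopGraph B} {GC : LoopGraph C}
  {GD : LoopGraph D} (S : BoxIso GA GB GC GD)

@[simps]
def symm : BoxIso GC GD GA GB where
  e := S.e.symm
  adj_iff x y := by rw [S.adj_iff, S.e.apply_symm_apply, S.e.apply_symm_apply]
  a₀ := S.c₀
  b₀ := S.d₀
  c₀ := S.a₀
  d₀ := S.b₀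
  e_base := by rw [← S.e_base, S.e.symm_apply_apply]
  not_adj_base := by rw [← S.e_base, ← S.adj_iff]; exact S.not_adj_base
  connected := IsIsomorphic.connected ⟨S.e, S.adj_iff⟩ S.connected

def swapAB : BoxIso GB GA GC GD where
  e := (Equiv.prodComm B A).trans S.e
  adj_iff x y := by
    rw [Equiv.trans_apply, Equiv.trans_apply, ← S.adj_iff]
    simp only [box, Equiv.prodComm_apply, Prod.fst_swap, Prod.snd_swap]
    tauto
  a₀ := S.b₀
  b₀ := S.a₀
  c₀ := S.c₀
  d₀ := S.d₀
  e_base := S.e_base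
  not_adj_base := by rw [box_adj_self, or_comm, ← box_adj_self]; exact S.not_adj_base
  connected := (box_comm GA GB).connected S.connected

@[simps]
def swapCD : BoxIso GA GB GD GC where
  e := S.e.trans (Equiv.prodComm C D)
  adj_iff x y := by
    rw [S.adj_iff]
    simp only [box, Equiv.trans_apply, Equiv.prodComm_apply, Prod.fst_swap, Prod.snd_swap]
    tauto
  a₀ := S.a₀
  b₀ := S.b₀
  c₀ := S.d₀
  d₀ := S.c₀
  e_base := by simp [S.e_base]
  not_adj_base := S.not_adj_base
  connected := S.connected

theorem not_adj_b₀ : ¬GB.adj S.b₀ S.b₀ := fun h => S.not_adj_base (box_adj_self.mpr (.inr h))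

theorem not_adj_d₀ : ¬GD.adj S.d₀ S.d₀ := S.symm.not_adj_b₀

def isoN : (GA.N □ GB.N) ≃g (GC.N □ GD.N) where
  toEquiv := S.e
  map_rel_iff' {x y} := by
    rw [← N_box, ← N_box]
    simp only [N, ne_eq, S.e.apply_eq_iff_eq, ← S.adj_iff]

/-- The vertices `a` such that `(a, b₀)` lies in the `GC`-layer `e⁻¹ (C × {d₀})` through the base
vertex. For `S`, `S.swapCD`, `S.swapAB` and `S.swapAB.swapCD` these are the four factors of the
common refinement; for `S.symm` it is the first factor seen inside `GC`. -/
def meet : Set A := {a | (S.e (a, S.b₀)).2 = S.d₀}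

theorem mem_symm_meet_iff {c : C} : c ∈ S.symm.meet ↔ ∃ a, S.e (a, S.b₀) = (c, S.d₀) := by
  simp only [meet, symm_e, symm_b₀, symm_d₀, Set.mem_ofPred_eq]
  constructor
  · intro h
    exact ⟨(S.e.symm (c, S.d₀)).1, by rw [← h, S.e.apply_symm_apply]⟩
  · rintro ⟨a, ha⟩
    rw [← ha, S.e.symm_apply_apply]

theorem exists_base_layer (p q : A) :
    ∃ a, (S.e (a, S.b₀)).1 = (S.e (p, S.b₀)).1 ∧ (S.e (a, S.b₀)).2 = (S.e (q, S.b₀)).2 :=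
  S.isoN.exists_layer_fst_eq_snd_eq (N_box GA GB ▸ S.connected).ofBoxProdLeft.preconnected
    S.b₀ p q

theorem isIsomorphic_box_meet :
    GA.IsIsomorphic ((GC.induce S.symm.meet).box (GD.induce S.swapCD.symm.meet)) := by
  have hmem : ∀ a, (S.e (a, S.b₀)).1 ∈ S.symm.meet ∧ (S.e (a, S.b₀)).2 ∈ S.swapCD.symm.meet := by
    intro a
    obtain ⟨a₁, h₁c, h₁d⟩ := S.exists_base_layer a S.a₀
    obtain ⟨a₂, h₂c, h₂d⟩ := S.exists_base_layer S.a₀ a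
    rw [S.e_base] at h₁d h₂c
    refine ⟨S.mem_symm_meet_iff.mpr ⟨a₁, Prod.ext h₁c h₁d⟩,
      S.swapCD.mem_symm_meet_iff.mpr ⟨a₂, Prod.ext h₂d h₂c⟩⟩
  refine ⟨Equiv.ofBijective (fun a => (⟨_, (hmem a).1⟩, ⟨_, (hmem a).2⟩)) ⟨?_, ?_⟩,
    fun a a' => ?_⟩
  · intro a a' h
    simp only [Prod.mk.injEq, Subtype.mk.injEq] at h
    exact congrArg Prod.fst (S.e.injective (Prod.ext h.1 h.2))
  · rintro ⟨⟨c, hc⟩, ⟨d, hd⟩⟩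
    obtain ⟨a₁, h₁⟩ := S.mem_symm_meet_iff.mp hc
    obtain ⟨a₂, h₂⟩ := S.swapCD.mem_symm_meet_iff.mp hd
    obtain ⟨a, hac, had⟩ := S.exists_base_layer a₁ a₂
    refine ⟨a, ?_⟩
    simp only [swapCD_e, swapCD_b₀, swapCD_d₀, Equiv.trans_apply, Equiv.prodComm_apply,
      Prod.swap_eq_iff_eq_swap, Prod.swap_prod_mk] at h₂
    simp [hac, had, h₁, h₂]
  · change GA.adj a a' ↔ ((GC.induce _).box (GD.induce _)).adj
      (⟨_, (hmem a).1⟩, ⟨_, (hmem a).2⟩) (⟨_, (hmem a').1⟩, ⟨_, (hmem a').2⟩)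
    rw [← box_adj_left_iff S.not_adj_b₀, S.adj_iff]
    simp only [box, induce, Subtype.mk.injEq]

theorem isIsomorphic_meet : (GA.induce S.meet).IsIsomorphic (GC.induce S.symm.meet) := by
  have hmem : ∀ a ∈ S.meet, (S.e (a, S.b₀)).1 ∈ S.symm.meet := fun a ha =>
    S.mem_symm_meet_iff.mpr ⟨a, Prod.ext rfl ha⟩
  refine ⟨Equiv.ofBijective (fun a => ⟨_, hmem a.1 a.2⟩) ⟨?_, ?_⟩, fun ⟨a, ha⟩ ⟨a', ha'⟩ => ?_⟩
  · rintro ⟨a, ha⟩ ⟨a', ha'⟩ h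
    simp only [Subtype.mk.injEq] at h
    exact Subtype.ext (congrArg Prod.fst (S.e.injective (Prod.ext h (ha.trans ha'.symm))))
  · rintro ⟨c, hc⟩
    obtain ⟨a, ha⟩ := S.mem_symm_meet_iff.mp hc
    exact ⟨⟨a, congrArg Prod.snd ha⟩, by simp [ha]⟩
  · have he : ∀ a ∈ S.meet, S.e (a, S.b₀) = ((S.e (a, S.b₀)).1, S.d₀) := fun a ha =>
      Prod.ext rfl ha
    change GA.adj a a' ↔ GC.adj (S.e (a, S.b₀)).1 (S.e (a', S.b₀)).1
    rw [← box_adj_left_iff S.not_adj_b₀, S.adj_iff, he a ha, he a' ha',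
      box_adj_left_iff S.not_adj_d₀]

end BoxIso

theorem exists_common_refinement {A B C D : Type*} {GA : LoopGraph A}
    {GB : LoopGraph B} {GC : LoopGraph C} {GD : LoopGraph D} (hconn : (GA.box GB).N.Connected)
    (hul : ∃ x, ¬(GA.box GB).adj x x) (h : (GA.box GB).IsIsomorphic (GC.box GD)) :
    ∃ (A₁ A₂ : Set A) (B₁ B₂ : Set B),
      GA.IsIsomorphic ((GA.induce A₁).box (GA.induce A₂)) ∧
      GB.IsIsomorphic ((GB.induce B₁).box (GB.induce B₂)) ∧
      GC.IsIsomorphic ((GA.induce A₁).box (GB.induce B₁)) ∧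
      GD.IsIsomorphic ((GA.induce A₂).box (GB.induce B₂)) := by
  obtain ⟨⟨a₀, b₀⟩, h₀⟩ := hul
  obtain ⟨e, he⟩ := h
  let S : BoxIso GA GB GC GD := ⟨e, he, a₀, b₀, _, _, rfl, h₀, hconn⟩
  exact ⟨S.meet, S.swapCD.meet, S.swapAB.meet, S.swapAB.swapCD.meet,
    S.isIsomorphic_box_meet.trans (S.isIsomorphic_meet.symm.box_congr
      S.swapCD.isIsomorphic_meet.symm),
    S.swapAB.isIsomorphic_box_meet.trans (S.swapAB.isIsomorphic_meet.symm.box_congr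
      S.swapAB.swapCD.isIsomorphic_meet.symm),
    S.symm.isIsomorphic_box_meet, S.swapCD.symm.isIsomorphic_box_meet⟩


theorem Irreducible.iso_or_exchange {X Y R S : Type u} {GX : LoopGraph X} {GY : LoopGraph Y}
    {GR : LoopGraph R} {GS : LoopGraph S} (hX : GX.Irreducible) (hY : GY.Irreducible)
    (hR : GR.N.Connected) (hRul : ∃ v, ¬GR.adj v v)
    (h : (GX.box GR).IsIsomorphic (GY.box GS)) :
    (GX.IsIsomorphic GY ∧ GR.IsIsomorphic GS) ∨
      ∃ (Q : Type u) (GQ : LoopGraph Q),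
        GR.IsIsomorphic (GY.box GQ) ∧ GS.IsIsomorphic (GX.box GQ) := by
  obtain ⟨A₁, A₂, B₁, B₂, hXA, hRB, hYAB, hSAB⟩ := exists_common_refinement
    (connected_box_iff.mpr ⟨hX.2.1, hR⟩) (exists_not_adj_box_iff.mpr ⟨hX.2.2.1, hRul⟩) h
  by_cases hA₁ : (GX.induce A₁).IsTrivial
  · have hXA₂ := hXA.trans (box_isTrivial_left hA₁)
    have hYB₁ := hYAB.trans (box_isTrivial_left hA₁)
    exact .inr ⟨_, _, hRB.trans (hYB₁.symm.box_congr (.refl _)),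
      hSAB.trans (hXA₂.symm.box_congr (.refl _))⟩
  · have hA₂ := (hX.2.2.2 _ _ _ _ hXA).resolve_left hA₁
    have hB₁ := (hY.2.2.2 _ _ _ _ hYAB).resolve_left hA₁
    exact .inl ⟨(hXA.trans (box_isTrivial_right hA₂)).trans
        (hYAB.trans (box_isTrivial_right hB₁)).symm,
      (hRB.trans (box_isTrivial_left hB₁)).trans (hSAB.trans (box_isTrivial_left hA₂)).symm⟩

theorem boxPi_succ {k : ℕ} {V : Fin (k + 1) → Type*} (G : ∀ i, LoopGraph (V i)) :
    (boxPi G).IsIsomorphic ((G 0).box (boxPi fun i => G i.succ)) := by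
  refine ⟨(Fin.consEquiv V).symm, fun x y => ?_⟩
  simp only [boxPi, box, Fin.consEquiv_symm_apply, funext_iff]
  constructor
  · rintro ⟨i, hi, hne⟩
    cases i using Fin.cases with
    | zero => exact .inl ⟨hi, fun j => hne _ j.succ_ne_zero⟩
    | succ i =>
      exact .inr ⟨hne 0 (Fin.succ_ne_zero i).symm, i, hi, fun j hj => hne _ (by simpa using hj)⟩
  · rintro (⟨h0, hs⟩ | ⟨h0, i, hi, hs⟩)
    · exact ⟨0, h0, fun j hj => by
        obtain ⟨j, rfl⟩ := Fin.exists_succ_eq.mpr hj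
        exact hs j⟩
    · refine ⟨i.succ, hi, fun j hj => ?_⟩
      cases j using Fin.cases with
      | zero => exact h0
      | succ j => exact hs j (by simpa using hj)

theorem isTrivial_boxPi_zero {V : Fin 0 → Type*} (G : ∀ i, LoopGraph (V i)) :
    (boxPi G).IsTrivial :=
  ⟨⟨finZeroElim, fun _ => funext finZeroElim⟩, fun _ ⟨i, _⟩ => i.elim0⟩

theorem IsTrivial.of_boxPi {k : ℕ} {V : Fin k → Type*} {G : ∀ i, LoopGraph (V i)}
    (h : (boxPi G).IsTrivial) (i : Fin k) : (G i).IsTrivial := by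
  classical
  obtain ⟨⟨p, hp⟩, hloop⟩ := h
  refine ⟨⟨p i, fun v => by simpa using congrFun (hp (Function.update p i v)) i⟩, fun v hv => ?_⟩
  exact hloop (Function.update p i v) ⟨i, by simpa using hv, fun _ _ => rfl⟩

theorem connected_boxPi {k : ℕ} {V : Fin k → Type*} {G : ∀ i, LoopGraph (V i)}
    (h : ∀ i, (G i).N.Connected) : (boxPi G).N.Connected := by
  induction k with
  | zero =>
    have : Unique (∀ i : Fin 0, V i) := Pi.uniqueOfIsEmpty V
    exact ⟨.of_subsingleton⟩
  | succ k ih =>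
    exact (boxPi_succ G).symm.connected
      (connected_box_iff.mpr ⟨h 0, ih fun i => h i.succ⟩)

theorem exists_not_adj_boxPi {k : ℕ} {V : Fin k → Type*} {G : ∀ i, LoopGraph (V i)}
    (h : ∀ i, ∃ v, ¬(G i).adj v v) : ∃ x, ¬(boxPi G).adj x x := by
  choose x hx using h
  exact ⟨x, fun ⟨i, hi, _⟩ => hx i hi⟩


def consFamily {X : Type u} {m : ℕ} {U : Fin m → Type u} (GX : LoopGraph X)
    (F : ∀ i, LoopGraph (U i)) : ∀ i, LoopGraph (Fin.cons (α := fun _ => Type u) X U i) :=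
  Fin.cons (α := fun i => LoopGraph (Fin.cons (α := fun _ => Type u) X U i)) GX F

def IsoUpToPerm {k l : ℕ} {V : Fin k → Type*} {W : Fin l → Type*} (G : ∀ i, LoopGraph (V i))
    (H : ∀ j, LoopGraph (W j)) : Prop :=
  ∃ π : Fin k ≃ Fin l, ∀ i, (G i).IsIsomorphic (H (π i))

namespace IsoUpToPerm

variable {k l n : ℕ} {V : Fin k → Type*} {W : Fin l → Type*} {Z : Fin n → Type*}
  {G : ∀ i, LoopGraph (V i)} {H : ∀ j, LoopGraph (W j)} {K : ∀ i, LoopGraph (Z i)}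

protected theorem symm (h : IsoUpToPerm G H) : IsoUpToPerm H G := by
  obtain ⟨π, hπ⟩ := h
  refine ⟨π.symm, fun j => ?_⟩
  have := (hπ (π.symm j)).symm
  rwa [π.apply_symm_apply] at this

protected theorem trans (h : IsoUpToPerm G H) (h' : IsoUpToPerm H K) : IsoUpToPerm G K := by
  obtain ⟨π, hπ⟩ := h
  obtain ⟨π', hπ'⟩ := h'
  exact ⟨π.trans π', fun i => (hπ i).trans (hπ' (π i))⟩

theorem cons_head_tail {V : Fin (k + 1) → Type u} (G : ∀ i, LoopGraph (V i)) :
    IsoUpToPerm G (consFamily (G 0) fun i => G i.succ) := by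
  refine ⟨Equiv.refl _, fun i => ?_⟩
  cases i using Fin.cases <;> exact .refl _

theorem cons {X Y : Type u} {U : Fin k → Type u} {U' : Fin l → Type u} {GX : LoopGraph X}
    {GY : LoopGraph Y} {F : ∀ i, LoopGraph (U i)} {F' : ∀ j, LoopGraph (U' j)}
    (hXY : GX.IsIsomorphic GY) (h : IsoUpToPerm F F') :
    IsoUpToPerm (consFamily GX F) (consFamily GY F') := by
  obtain ⟨π, hπ⟩ := h
  let σ : Fin (k + 1) ≃ Fin (l + 1) :=
    (finSuccEquiv k).trans ((Equiv.optionCongr π).trans (finSuccEquiv l).symm)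
  refine ⟨σ, fun i => ?_⟩
  cases i using Fin.cases with
  | zero =>
    have : σ 0 = 0 := by simp [σ]
    rw [this]
    exact hXY
  | succ i =>
    have : σ i.succ = (π i).succ := by simp [σ]
    rw [this]
    exact hπ i

theorem cons_swap {X Y : Type u} {U : Fin k → Type u} (GX : LoopGraph X) (GY : LoopGraph Y)
    (F : ∀ i, LoopGraph (U i)) :
    IsoUpToPerm (consFamily GX (consFamily GY F)) (consFamily GY (consFamily GX F)) := by
  refine ⟨Equiv.swap 0 (Fin.succ 0), fun i => ?_⟩
  cases i using Fin.cases with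
  | zero => rw [Equiv.swap_apply_left]; exact .refl _
  | succ i =>
    cases i using Fin.cases with
    | zero => rw [Equiv.swap_apply_right]; exact .refl _
    | succ i =>
      rw [Equiv.swap_apply_of_ne_of_ne (Fin.succ_ne_zero _)
        (Fin.succ_injective _ |>.ne (Fin.succ_ne_zero _))]
      exact .refl _

end IsoUpToPerm


theorem boxPi_consFamily {X : Type u} {m : ℕ} {U : Fin m → Type u} (GX : LoopGraph X)
    (F : ∀ i, LoopGraph (U i)) : (boxPi (consFamily GX F)).IsIsomorphic (GX.box (boxPi F)) :=
  boxPi_succ _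

def HasIrreducibleFactorization {V : Type u} (G : LoopGraph V) : Prop :=
  ∃ (m : ℕ) (U : Fin m → Type u) (F : ∀ i, LoopGraph (U i)),
    (∀ i, Finite (U i)) ∧ (∀ i, (F i).Irreducible) ∧ G.IsIsomorphic (boxPi F)

theorem HasIrreducibleFactorization.of_isIsomorphic {V W : Type u} {G : LoopGraph V}
    {H : LoopGraph W} (hGH : G.IsIsomorphic H) (h : H.HasIrreducibleFactorization) :
    G.HasIrreducibleFactorization := by
  obtain ⟨m, U, F, hU, hF, hHF⟩ := h
  exact ⟨m, U, F, hU, hF, hGH.trans hHF⟩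

theorem exists_box_of_not_irreducible {V : Type u} {G : LoopGraph V} (hnt : ¬G.IsTrivial)
    (hconn : G.N.Connected) (hul : ∃ v, ¬G.adj v v) (hG : ¬G.Irreducible) :
    ∃ (W L : Type u) (H : LoopGraph W) (K : LoopGraph L),
      G.IsIsomorphic (H.box K) ∧ ¬H.IsTrivial ∧ ¬K.IsTrivial := by
  simp only [Irreducible, hnt, hconn, hul, not_false_eq_true, true_and, not_forall, not_or] at hG
  obtain ⟨W, L, H, K, hGHK, hH, hK⟩ := hG
  exact ⟨W, L, H, K, hGHK, hH, hK⟩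

theorem hasIrreducibleFactorization_box_boxPi {X : Type u} [Finite X] {GX : LoopGraph X}
    (hconn : GX.N.Connected) (hul : ∃ v, ¬GX.adj v v) {m : ℕ} {U : Fin m → Type u}
    {F : ∀ i, LoopGraph (U i)} (hU : ∀ i, Finite (U i)) (hF : ∀ i, (F i).Irreducible) :
    (GX.box (boxPi F)).HasIrreducibleFactorization := by
  induction hn : Nat.card X using Nat.strong_induction_on generalizing X m with
  | _ n ih =>
  by_cases htriv : GX.IsTrivial
  · exact ⟨m, U, F, hU, hF, box_isTrivial_left htriv⟩
  by_cases hirr : GX.Irreducible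
  · exact ⟨m + 1, _, consFamily GX F, Fin.cases ‹_› hU, Fin.cases hirr hF,
      (boxPi_consFamily GX F).symm⟩
  obtain ⟨W, L, H, K, hGHK, hH, hK⟩ := exists_box_of_not_irreducible htriv hconn hul hirr
  obtain ⟨hHconn, hKconn⟩ := connected_box_iff.mp (hGHK.connected hconn)
  obtain ⟨hHul, hKul⟩ := exists_not_adj_box_iff.mp (hGHK.exists_not_adj hul)
  have : Nonempty W := hHconn.nonempty
  have : Nonempty L := hKconn.nonempty
  have : Finite L := hGHK.finite_right
  have : Finite W := ((box_comm H K).symm.trans hGHK.symm).symm.finite_right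
  have hcard : n = Nat.card W * Nat.card L := by
    rw [← hn, Nat.card_congr hGHK.choose, Nat.card_prod]
  have hW := one_lt_card_of_not_isTrivial hHul hH
  have hL := one_lt_card_of_not_isTrivial hKul hK
  obtain ⟨m', U', F', hU', hF', hKF⟩ :=
    ih (Nat.card L) (by rw [hcard]; exact lt_mul_left (by omega) hW) hKconn hKul hU hF rfl
  refine (ih (Nat.card W) (by rw [hcard]; exact lt_mul_right (by omega) hL) hHconn hHul hU' hF'
    rfl).of_isIsomorphic ?_
  exact ((hGHK.box_congr (.refl _)).trans (box_assoc H K _)).trans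
    ((IsIsomorphic.refl H).box_congr hKF)

theorem hasIrreducibleFactorization {X : Type u} [Finite X] {GX : LoopGraph X}
    (hconn : GX.N.Connected) (hul : ∃ v, ¬GX.adj v v) : GX.HasIrreducibleFactorization :=
  (hasIrreducibleFactorization_box_boxPi hconn hul (U := fun _ => PUnit) (F := finZeroElim)
    finZeroElim finZeroElim).of_isIsomorphic
    (box_isTrivial_right (isTrivial_boxPi_zero _)).symm


theorem isoUpToPerm_of_isIsomorphic_boxPi {k l : ℕ} {V : Fin k → Type u} {W : Fin l → Type u}
    [∀ i, Finite (V i)] {G : ∀ i, LoopGraph (V i)} {H : ∀ j, LoopGraph (W j)}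
    (hG : ∀ i, (G i).Irreducible) (hH : ∀ j, (H j).Irreducible)
    (h : (boxPi G).IsIsomorphic (boxPi H)) : IsoUpToPerm G H := by
  induction k using Nat.strong_induction_on generalizing l with
  | _ k ih =>
  rcases k with _ | k
  · obtain rfl : l = 0 := by
      by_contra hl
      exact (hH ⟨0, by omega⟩).1 ((h.isTrivial (isTrivial_boxPi_zero G)).of_boxPi _)
    exact ⟨Equiv.refl _, finZeroElim⟩
  rcases l with _ | l
  · exact absurd ((h.symm.isTrivial (isTrivial_boxPi_zero H)).of_boxPi 0) (hG 0).1
  have hR : (boxPi fun i => G i.succ).N.Connected := connected_boxPi fun i => (hG _).2.1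
  have hRul : ∃ x, ¬(boxPi fun i => G i.succ).adj x x := exists_not_adj_boxPi fun i => (hG _).2.2.1
  have h' := ((boxPi_succ G).symm.trans h).trans (boxPi_succ H)
  rcases (hG 0).iso_or_exchange (hH 0) hR hRul h' with ⟨h₀, hRS⟩ | ⟨Q, GQ, hRQ, hSQ⟩
  · exact (IsoUpToPerm.cons_head_tail G).trans
      (((ih k k.lt_succ_self (fun i => hG _) (fun j => hH _) hRS).cons h₀).trans
        (IsoUpToPerm.cons_head_tail H).symm)
  obtain ⟨hY, hQ⟩ := connected_box_iff.mp (hRQ.connected hR)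
  have : Nonempty (W 0) := hY.nonempty
  have : Finite Q := hRQ.finite_right
  obtain ⟨m, U, E, hU, hE, hQE⟩ :=
    hasIrreducibleFactorization hQ (exists_not_adj_box_iff.mp (hRQ.exists_not_adj hRul)).2
  have hRE := ih k k.lt_succ_self (fun i => hG _) (H := consFamily (H 0) E) (Fin.cases (hH 0) hE)
    ((hRQ.trans ((IsIsomorphic.refl _).box_congr hQE)).trans (boxPi_consFamily _ _).symm)
  have hmk : m + 1 = k := (Fin.equiv_iff_eq.mp ⟨hRE.choose⟩).symm
  have : ∀ i, Finite (Fin.cons (α := fun _ => Type u) (V 0) U i) :=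
    Fin.cases (inferInstanceAs (Finite (V 0))) hU
  have hES := ih (m + 1) (by omega) (G := consFamily (G 0) E) (Fin.cases (hG 0) hE)
    (fun j => hH _) ((boxPi_consFamily _ _).trans
      (((IsIsomorphic.refl _).box_congr hQE).symm.trans hSQ.symm))
  exact (IsoUpToPerm.cons_head_tail G).trans <| (hRE.cons (.refl _)).trans <|
    (IsoUpToPerm.cons_swap _ _ _).trans <| (hES.cons (.refl _)).trans
      (IsoUpToPerm.cons_head_tail H).symm

end LoopGraph

theorem prime_factorization_unique_general {k l : ℕ} {V : Fin k → Type u} {W : Fin l → Type u}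
    [∀ i, Fintype (V i)]
    (G : ∀ i, LoopGraph (V i)) (H : ∀ j, LoopGraph (W j))
    (hGirr : ∀ i, (G i).Irreducible) (hHirr : ∀ j, (H j).Irreducible)
    (φ : (∀ i, V i) ≃ (∀ j, W j))
    (hφ : ∀ x y, (LoopGraph.boxPi G).adj x y ↔
      (LoopGraph.boxPi H).adj (φ x) (φ y)) :
    k = l ∧ ∃ π : Fin k ≃ Fin l, ∀ i, (G i).IsIsomorphic (H (π i)) := by
  obtain ⟨π, hπ⟩ := LoopGraph.isoUpToPerm_of_isIsomorphic_boxPi hGirr hHirr ⟨φ, hφ⟩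
  exact ⟨Fin.equiv_iff_eq.mp ⟨π⟩, π, hπ⟩

/-- Uniqueness of prime factorization: if two products of
irreducible graphs are isomorphic (nontrivial, connected, with an unlooped
vertex), then the factors agree up to a permutation and isomorphisms. -/
theorem prime_factorization_unique {k l : ℕ} {V : Fin k → Type u} {W : Fin l → Type u}
    [∀ i, Fintype (V i)] [∀ j, Fintype (W j)]
    (G : ∀ i, LoopGraph (V i)) (H : ∀ j, LoopGraph (W j))
    (hGirr : ∀ i, (G i).Irreducible) (hHirr : ∀ j, (H j).Irreducible)
    (hGnt : ¬ (LoopGraph.boxPi G).IsTrivial)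
    (hGconn : (LoopGraph.boxPi G).N.Connected)
    (hGul : ∃ v, ¬ (LoopGraph.boxPi G).adj v v)
    (hHnt : ¬ (LoopGraph.boxPi H).IsTrivial)
    (hHconn : (LoopGraph.boxPi H).N.Connected)
    (hHul : ∃ w, ¬ (LoopGraph.boxPi H).adj w w)
    (φ : (∀ i, V i) ≃ (∀ j, W j))
    (hφ : ∀ x y, (LoopGraph.boxPi G).adj x y ↔
      (LoopGraph.boxPi H).adj (φ x) (φ y)) :
    k = l ∧ ∃ π : Fin k ≃ Fin l, ∀ i, (G i).IsIsomorphic (H (π i)) :=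
  prime_factorization_unique_general G H hGirr hHirr φ hφ
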